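/- arXiv:2602.16518 — 4 statements merged into one kernel-verified Lean document; each statement's English description precedes it below -/
import Mathlib

section
/- Let L be a set of three distinct lines in the plane all passing through a common point p*, partitioning the plane into six closed wedges. Then any convex set S ⊆ ℝ² that does not contain p* intersects at most four of the six wedges. -/
/-- Auxiliary: a point expressed as a nonneg combination of three points of a
convex set lies in the set; contradiction with `p ∉ S`. -/
lemma wedge_step {S : Set (ℝ × ℝ)} (hS : Convex ℝ S) {p : ℝ × ℝ} (hp : p ∉ S)
    (w₁ w₂ w₃ : ℝ) (v₁ v₂ v₃ : ℝ × ℝ) (hv₁ : v₁ ∈ S) (hv₂ : v₂ ∈ S) (hv₃ : v₃ ∈ S)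
    (hw₁ : 0 ≤ w₁) (hw₂ : 0 ≤ w₂) (hw₃ : 0 ≤ w₃) (hsum : w₁ + w₂ + w₃ = 1)
    (hc1 : w₁ * (v₁.1 - p.1) + w₂ * (v₂.1 - p.1) + w₃ * (v₃.1 - p.1) = 0)
    (hc2 : w₁ * (v₁.2 - p.2) + w₂ * (v₂.2 - p.2) + w₃ * (v₃.2 - p.2) = 0) : False := by
  have hmem : w₁ • v₁ + w₂ • v₂ + w₃ • v₃ ∈ S := by
    rcases eq_or_lt_of_le (add_nonneg hw₂ hw₃) with h23 | h23
    · have hw2 : w₂ = 0 := by linarith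
      have hw3 : w₃ = 0 := by linarith
      have hw1 : w₁ = 1 := by linarith
      simpa [hw1, hw2, hw3] using hv₁
    · have hm : (w₂ / (w₂ + w₃)) • v₂ + (w₃ / (w₂ + w₃)) • v₃ ∈ S :=
        hS hv₂ hv₃ (by positivity) (by positivity) (by field_simp)
      have hmem2 := hS hv₁ hm hw₁ (le_of_lt h23) (by linarith)
      have heq : w₁ • v₁ + (w₂ + w₃) • ((w₂ / (w₂ + w₃)) • v₂ + (w₃ / (w₂ + w₃)) • v₃)
          = w₁ • v₁ + w₂ • v₂ + w₃ • v₃ := by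
        rw [smul_add, smul_smul, smul_smul,
          mul_div_cancel₀ _ (ne_of_gt h23), mul_div_cancel₀ _ (ne_of_gt h23), add_assoc]
      rw [heq] at hmem2; exact hmem2
  have hpe : w₁ • v₁ + w₂ • v₂ + w₃ • v₃ = p := by
    have e1 : (w₁ • v₁ + w₂ • v₂ + w₃ • v₃).1 = w₁ * v₁.1 + w₂ * v₂.1 + w₃ * v₃.1 := rfl
    have e2 : (w₁ • v₁ + w₂ • v₂ + w₃ • v₃).2 = w₁ * v₁.2 + w₂ * v₂.2 + w₃ * v₃.2 := rfl
    apply Prod.ext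
    · rw [e1]; linear_combination hc1 + p.1 * hsum
    · rw [e2]; linear_combination hc2 + p.2 * hsum
  exact hp (hpe ▸ hmem)

/-- Key lemma: a convex set avoiding `p` cannot meet all three alternate wedges. -/
lemma wedge_key {S : Set (ℝ × ℝ)} (hS : Convex ℝ S) {p : ℝ × ℝ} (hp : p ∉ S)
    (A B C : ℝ) (hAB : A < B) (hBC : B < C) (hCA : C < A + Real.pi)
    (x z y : ℝ × ℝ) (hx : x ∈ S) (hz : z ∈ S) (hy : y ∈ S)
    (a₁ a₂ b₁ b₂ c₁ c₂ : ℝ)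
    (ha₁ : 0 ≤ a₁) (ha₂ : 0 ≤ a₂) (hb₁ : 0 ≤ b₁) (hb₂ : 0 ≤ b₂)
    (hc₁ : 0 ≤ c₁) (hc₂ : 0 ≤ c₂)
    (hxe : x = p + a₁ • ((Real.cos A, Real.sin A) : ℝ × ℝ)
             + a₂ • ((Real.cos B, Real.sin B) : ℝ × ℝ))
    (hze : z = p + b₁ • ((Real.cos C, Real.sin C) : ℝ × ℝ)
             + b₂ • ((Real.cos (A + Real.pi), Real.sin (A + Real.pi)) : ℝ × ℝ))
    (hye : y = p + c₁ • ((Real.cos (B + Real.pi), Real.sin (B + Real.pi)) : ℝ × ℝ)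
             + c₂ • ((Real.cos (C + Real.pi), Real.sin (C + Real.pi)) : ℝ × ℝ)) :
    False := by
  obtain ⟨s₁, hs₁, e₁⟩ : ∃ s, 0 < s ∧ s = Real.sin B * Real.cos A - Real.cos B * Real.sin A :=
    ⟨_, Real.sin_pos_of_pos_of_lt_pi (by linarith) (by linarith : B - A < Real.pi),
      by rw [Real.sin_sub]⟩
  obtain ⟨s₂, hs₂, e₂⟩ : ∃ s, 0 < s ∧ s = Real.sin C * Real.cos B - Real.cos C * Real.sin B :=
    ⟨_, Real.sin_pos_of_pos_of_lt_pi (by linarith) (by linarith : C - B < Real.pi),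
      by rw [Real.sin_sub]⟩
  obtain ⟨s₃, hs₃, e₃⟩ : ∃ s, 0 < s ∧ s = Real.sin C * Real.cos A - Real.cos C * Real.sin A :=
    ⟨_, Real.sin_pos_of_pos_of_lt_pi (by linarith) (by linarith : C - A < Real.pi),
      by rw [Real.sin_sub]⟩
  have hx1 : x.1 - p.1 = a₁ * Real.cos A + a₂ * Real.cos B := by rw [hxe]; simp; ring
  have hx2 : x.2 - p.2 = a₁ * Real.sin A + a₂ * Real.sin B := by rw [hxe]; simp; ring
  have hz1 : z.1 - p.1 = b₁ * Real.cos C - b₂ * Real.cos A := by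
    rw [hze]; simp [Real.cos_add, Real.sin_add]; ring
  have hz2 : z.2 - p.2 = b₁ * Real.sin C - b₂ * Real.sin A := by
    rw [hze]; simp [Real.cos_add, Real.sin_add]; ring
  have hy1 : y.1 - p.1 = -(c₁ * Real.cos B) - c₂ * Real.cos C := by
    rw [hye]; simp [Real.cos_add, Real.sin_add]; ring
  have hy2 : y.2 - p.2 = -(c₁ * Real.sin B) - c₂ * Real.sin C := by
    rw [hye]; simp [Real.cos_add, Real.sin_add]; ring
  obtain ⟨D, hDdef⟩ : ∃ D, D = b₁ * c₁ * s₂ + b₂ * c₁ * s₁ + b₂ * c₂ * s₃ := ⟨_, rfl⟩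
  obtain ⟨E, hEdef⟩ : ∃ E, E = a₁ * c₁ * s₁ + a₁ * c₂ * s₃ + a₂ * c₂ * s₂ := ⟨_, rfl⟩
  obtain ⟨F, hFdef⟩ : ∃ F, F = b₁ * a₁ * s₃ + b₁ * a₂ * s₂ + b₂ * a₂ * s₁ := ⟨_, rfl⟩
  have hD0 : 0 ≤ D := by rw [hDdef]; positivity
  have hE0 : 0 ≤ E := by rw [hEdef]; positivity
  have hF0 : 0 ≤ F := by rw [hFdef]; positivity
  have hid1 : D * (x.1 - p.1) + E * (z.1 - p.1) + F * (y.1 - p.1) = 0 := by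
    rw [hx1, hz1, hy1, hDdef, hEdef, hFdef, e₁, e₂, e₃]; ring
  have hid2 : D * (x.2 - p.2) + E * (z.2 - p.2) + F * (y.2 - p.2) = 0 := by
    rw [hx2, hz2, hy2, hDdef, hEdef, hFdef, e₁, e₂, e₃]; ring
  by_cases hDz : D = 0
  · -- degenerate case: z - p and y - p are opposite multiples of (cos C, sin C)
    have hznep : ¬ (b₁ = 0 ∧ b₂ = 0) := by
      rintro ⟨h1, h2⟩
      apply hp
      have : z = p := by rw [hze, h1, h2]; simp
      rwa [this] at hz
    have hynep : ¬ (c₁ = 0 ∧ c₂ = 0) := by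
      rintro ⟨h1, h2⟩
      apply hp
      have : y = p := by rw [hye, h1, h2]; simp
      rwa [this] at hy
    have hsum0 : b₁ * c₁ * s₂ + b₂ * c₁ * s₁ + b₂ * c₂ * s₃ = 0 := by
      rw [← hDdef]; exact hDz
    have hm1 : 0 ≤ b₁ * c₁ * s₂ := mul_nonneg (mul_nonneg hb₁ hc₁) hs₂.le
    have hm2 : 0 ≤ b₂ * c₁ * s₁ := mul_nonneg (mul_nonneg hb₂ hc₁) hs₁.le
    have hm3 : 0 ≤ b₂ * c₂ * s₃ := mul_nonneg (mul_nonneg hb₂ hc₂) hs₃.le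
    have ht1 : b₁ * c₁ = 0 := by
      have : b₁ * c₁ * s₂ = 0 := by linarith
      rcases mul_eq_zero.mp this with h | h
      · exact h
      · exact absurd h (ne_of_gt hs₂)
    have ht2 : b₂ * c₁ = 0 := by
      have : b₂ * c₁ * s₁ = 0 := by linarith
      rcases mul_eq_zero.mp this with h | h
      · exact h
      · exact absurd h (ne_of_gt hs₁)
    have ht3 : b₂ * c₂ = 0 := by
      have : b₂ * c₂ * s₃ = 0 := by linarith
      rcases mul_eq_zero.mp this with h | h
      · exact h
      · exact absurd h (ne_of_gt hs₃)
    have hc1z : c₁ = 0 := by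
      by_contra hc1z
      exact hznep ⟨by
        rcases mul_eq_zero.mp ht1 with h | h
        · exact h
        · exact absurd h hc1z, by
        rcases mul_eq_zero.mp ht2 with h | h
        · exact h
        · exact absurd h hc1z⟩
    have hc2p : 0 < c₂ := by
      rcases eq_or_lt_of_le hc₂ with h | h
      · exact absurd ⟨hc1z, h.symm⟩ hynep
      · exact h
    have hb2z : b₂ = 0 := by
      rcases mul_eq_zero.mp ht3 with h | h
      · exact h
      · exact absurd h (ne_of_gt hc2p)
    have hb1p : 0 < b₁ := by
      rcases eq_or_lt_of_le hb₁ with h | h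
      · exact absurd ⟨h.symm, hb2z⟩ hznep
      · exact h
    have hT : 0 < b₁ + c₂ := by linarith
    refine wedge_step hS hp 0 (c₂ / (b₁ + c₂)) (b₁ / (b₁ + c₂)) x z y hx hz hy le_rfl
      (by positivity) (by positivity) (by field_simp; ring) ?_ ?_
    · rw [hz1, hy1, hc1z, hb2z]; field_simp; ring
    · rw [hz2, hy2, hc1z, hb2z]; field_simp; ring
  · have hDp : 0 < D := lt_of_le_of_ne hD0 (Ne.symm hDz)
    have hT : 0 < D + E + F := by linarith
    refine wedge_step hS hp (D / (D + E + F)) (E / (D + E + F)) (F / (D + E + F)) x z y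
      hx hz hy (by positivity) (by positivity) (by positivity) (by field_simp) ?_ ?_
    · field_simp
      linear_combination hid1
    · field_simp
      linear_combination hid2

/-- Three distinct concurrent lines through `p` partition the plane into six closed
wedges `W i`, where the boundary rays have directions at angles `θ 0 < θ 1 < ... < θ 5`
with opposite rays satisfying `θ (i+3) = θ i + π`.  Any convex set `S` not containing
`p` intersects at most four of the six wedges. -/
theorem stmt0 (p : ℝ × ℝ) (θ : Fin 6 → ℝ)
    (hθ : StrictMono θ)
    (hπ : ∀ i : Fin 6, (i : ℕ) < 3 → θ (i + 3) = θ i + Real.pi)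
    (W : Fin 6 → Set (ℝ × ℝ))
    (hW : ∀ i, W i = {x | ∃ a b : ℝ, 0 ≤ a ∧ 0 ≤ b ∧
        x = p + a • ((Real.cos (θ i), Real.sin (θ i)) : ℝ × ℝ)
              + b • ((Real.cos (θ (i + 1)), Real.sin (θ (i + 1))) : ℝ × ℝ)})
    (S : Set (ℝ × ℝ)) (hS : Convex ℝ S) (hp : p ∉ S) :
    {i : Fin 6 | (S ∩ W i).Nonempty}.ncard ≤ 4 := by
  by_contra hcon
  push_neg at hcon
  set H := {i : Fin 6 | (S ∩ W i).Nonempty} with hH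
  -- at most one wedge is missed
  have hmiss : ∀ a b : Fin 6, a ≠ b → a ∉ H → b ∉ H → False := by
    intro a b hab ha hb
    have hsub : H ⊆ ((({a, b} : Finset (Fin 6))ᶜ : Finset (Fin 6)) : Set (Fin 6)) := by
      intro i hi
      simp only [Finset.coe_compl, Set.mem_compl_iff, Finset.coe_insert,
        Set.mem_insert_iff, Finset.coe_singleton, Set.mem_singleton_iff]
      rintro (rfl | rfl)
      · exact ha hi
      · exact hb hi
    have hle := Set.ncard_le_ncard hsub (Set.toFinite _)
    rw [Set.ncard_coe_finset, Finset.card_compl, Finset.card_pair hab] at hle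
    simp only [Fintype.card_fin] at hle
    omega
  have mem_of : ∀ a b : Fin 6, a ≠ b → a ∉ H → b ∈ H := by
    intro a b hab ha
    by_contra hb
    exact hmiss a b hab ha hb
  -- the set S meets all wedges in one of the two alternating triples
  have htriple : ((0 : Fin 6) ∈ H ∧ (2 : Fin 6) ∈ H ∧ (4 : Fin 6) ∈ H) ∨
      ((1 : Fin 6) ∈ H ∧ (3 : Fin 6) ∈ H ∧ (5 : Fin 6) ∈ H) := by
    by_cases h0 : (0 : Fin 6) ∈ H
    · by_cases h2 : (2 : Fin 6) ∈ H
      · by_cases h4 : (4 : Fin 6) ∈ H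
        · exact Or.inl ⟨h0, h2, h4⟩
        · exact Or.inr ⟨mem_of 4 1 (by decide) h4, mem_of 4 3 (by decide) h4,
            mem_of 4 5 (by decide) h4⟩
      · exact Or.inr ⟨mem_of 2 1 (by decide) h2, mem_of 2 3 (by decide) h2,
          mem_of 2 5 (by decide) h2⟩
    · exact Or.inr ⟨mem_of 0 1 (by decide) h0, mem_of 0 3 (by decide) h0,
        mem_of 0 5 (by decide) h0⟩
  have hπ0 : θ 3 = θ 0 + Real.pi := by
    have := hπ 0 (by norm_num)
    simpa using this
  have hπ1 : θ 4 = θ 1 + Real.pi := by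
    have := hπ 1 (by norm_num)
    simpa using this
  have hπ2 : θ 5 = θ 2 + Real.pi := by
    have := hπ 2 (by norm_num)
    simpa using this
  rcases htriple with ⟨h0, h2, h4⟩ | ⟨h1, h3, h5⟩
  · obtain ⟨x, hxS, hxW⟩ := h0
    obtain ⟨z, hzS, hzW⟩ := h2
    obtain ⟨y, hyS, hyW⟩ := h4
    rw [hW 0] at hxW; rw [hW 2] at hzW; rw [hW 4] at hyW
    obtain ⟨a₁, a₂, ha₁, ha₂, hxe⟩ := hxW
    obtain ⟨b₁, b₂, hb₁, hb₂, hze⟩ := hzW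
    obtain ⟨c₁, c₂, hc₁, hc₂, hye⟩ := hyW
    have i01 : (0 : Fin 6) + 1 = 1 := by decide
    have i21 : (2 : Fin 6) + 1 = 3 := by decide
    have i41 : (4 : Fin 6) + 1 = 5 := by decide
    rw [i01] at hxe; rw [i21, hπ0] at hze; rw [i41, hπ1, hπ2] at hye
    exact wedge_key hS hp (θ 0) (θ 1) (θ 2)
      (hθ (by decide : (0 : Fin 6) < 1)) (hθ (by decide : (1 : Fin 6) < 2))
      (by rw [← hπ0]; exact hθ (by decide : (2 : Fin 6) < 3))
      x z y hxS hzS hyS a₁ a₂ b₁ b₂ c₁ c₂ ha₁ ha₂ hb₁ hb₂ hc₁ hc₂ hxe hze hye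
  · obtain ⟨x, hxS, hxW⟩ := h1
    obtain ⟨z, hzS, hzW⟩ := h3
    obtain ⟨y, hyS, hyW⟩ := h5
    rw [hW 1] at hxW; rw [hW 3] at hzW; rw [hW 5] at hyW
    obtain ⟨a₁, a₂, ha₁, ha₂, hxe⟩ := hxW
    obtain ⟨b₁, b₂, hb₁, hb₂, hze⟩ := hzW
    obtain ⟨c₁, c₂, hc₁, hc₂, hye⟩ := hyW
    have i11 : (1 : Fin 6) + 1 = 2 := by decide
    have i31 : (3 : Fin 6) + 1 = 4 := by decide
    have i51 : (5 : Fin 6) + 1 = 0 := by decide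
    -- for the last wedge we need periodicity: θ 0 ∼ (θ 0 + π) + π  (mod 2π)
    have hc0 : Real.cos (θ 0) = Real.cos (θ 0 + Real.pi + Real.pi) := by
      rw [add_assoc, show Real.pi + Real.pi = 2 * Real.pi by ring, Real.cos_add_two_pi]
    have hs0 : Real.sin (θ 0) = Real.sin (θ 0 + Real.pi + Real.pi) := by
      rw [add_assoc, show Real.pi + Real.pi = 2 * Real.pi by ring, Real.sin_add_two_pi]
    rw [i11] at hxe
    rw [i31, hπ1] at hze
    rw [i51, hπ2, hc0, hs0] at hye
    exact wedge_key hS hp (θ 1) (θ 2) (θ 0 + Real.pi)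
      (hθ (by decide : (1 : Fin 6) < 2))
      (by rw [← hπ0]; exact hθ (by decide : (2 : Fin 6) < 3))
      (by have := hθ (by decide : (0 : Fin 6) < 1); linarith)
      x z y hxS hzS hyS a₁ a₂ b₁ b₂ c₁ c₂ ha₁ ha₂ hb₁ hb₂ hc₁ hc₂ hxe
      (by rw [hze, hπ0]) hye
end

section
/- Let σ₁ and σ₂ be axis-parallel squares arising as cells of a quadtree (i.e., each is obtained from a fixed root square by repeatedly subdividing a square into its four congruent quadrants). If the distance between the boundaries of σ₁ and σ₂ is positive, then this distance is at least min(size(σ₁), size(σ₂)), where size denotes the edge length. -/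
open Set

/-- A dyadic (quadtree) square: `[a·2^j, (a+1)·2^j] × [b·2^j, (b+1)·2^j]`. -/
def dyadicSquare (a b j : ℤ) : Set (EuclideanSpace ℝ (Fin 2)) :=
  {x | x 0 ∈ Icc ((a : ℝ) * 2 ^ j) (((a : ℝ) + 1) * 2 ^ j) ∧
       x 1 ∈ Icc ((b : ℝ) * 2 ^ j) (((b : ℝ) + 1) * 2 ^ j)}

/-- The distance between two sets: infimum of pairwise distances. -/
noncomputable def setDist (s t : Set (EuclideanSpace ℝ (Fin 2))) : ℝ :=
  sInf {d | ∃ x ∈ s, ∃ y ∈ t, d = dist x y}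

/-!
Project both cells onto each coordinate axis. Two dyadic intervals of lengths `2^j ≤ 2^k`
have all their endpoints in `2^j ℤ`, so they either meet or are at least `2^j` apart.
If the projections meet on both axes the cells share a point and their distance is `0`;
otherwise the cells are separated along one axis by at least the smaller edge length,
and the Euclidean distance dominates each coordinate distance.
-/

def dyadicInterval (a j : ℤ) : Set ℝ :=
  Icc ((a : ℝ) * 2 ^ j) (((a : ℝ) + 1) * 2 ^ j)

lemma left_mem_dyadicInterval (a j : ℤ) : (a : ℝ) * 2 ^ j ∈ dyadicInterval a j :=
  left_mem_Icc.2 (by have : (0 : ℝ) < 2 ^ j := zpow_pos two_pos j; linarith)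

lemma mem_dyadicSquare {a b j : ℤ} {x : EuclideanSpace ℝ (Fin 2)} :
    x ∈ dyadicSquare a b j ↔ x 0 ∈ dyadicInterval a j ∧ x 1 ∈ dyadicInterval b j :=
  Iff.rfl

lemma mk_mem_dyadicSquare {a b j : ℤ} {u v : ℝ} :
    !₂[u, v] ∈ dyadicSquare a b j ↔ u ∈ dyadicInterval a j ∧ v ∈ dyadicInterval b j :=
  Iff.rfl

lemma dyadicSquare_nonempty (a b j : ℤ) : (dyadicSquare a b j).Nonempty :=
  ⟨_, mk_mem_dyadicSquare.2 ⟨left_mem_dyadicInterval a j, left_mem_dyadicInterval b j⟩⟩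

lemma int_mul_add_le_of_lt {m n : ℤ} {h : ℝ} (hh : 0 < h) (hlt : m * h < n * h) :
    m * h + h ≤ n * h := by
  have hmn : (m : ℝ) + 1 ≤ n := by
    exact_mod_cast (lt_of_mul_lt_mul_right hlt hh.le : (m : ℝ) < n)
  nlinarith

lemma exists_int_mul_zpow_eq_of_le {i j : ℤ} (hij : i ≤ j) (a : ℤ) :
    ∃ m : ℤ, (a : ℝ) * 2 ^ j = m * 2 ^ i := by
  refine ⟨a * 2 ^ (j - i).toNat, ?_⟩
  push_cast
  rw [mul_assoc, ← zpow_natCast, ← zpow_add₀ two_ne_zero,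
    Int.toNat_of_nonneg (sub_nonneg.2 hij), sub_add_cancel]

lemma add_min_zpow_le_of_lt {a b j k : ℤ} (h : (a : ℝ) * 2 ^ j < b * 2 ^ k) :
    (a : ℝ) * 2 ^ j + min (2 ^ j) (2 ^ k) ≤ b * 2 ^ k := by
  have hmin : min ((2 : ℝ) ^ j) (2 ^ k) = 2 ^ min j k :=
    ((zpow_right_strictMono₀ one_lt_two).monotone.map_min).symm
  obtain ⟨m, hm⟩ := exists_int_mul_zpow_eq_of_le (min_le_left j k) a
  obtain ⟨n, hn⟩ := exists_int_mul_zpow_eq_of_le (min_le_right j k) b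
  rw [hm, hn] at h ⊢
  rw [hmin]
  exact int_mul_add_le_of_lt (zpow_pos two_pos _) h

lemma dyadicInterval_inter_nonempty_or_separated (a j b k : ℤ) :
    (dyadicInterval a j ∩ dyadicInterval b k).Nonempty ∨
      ∀ x ∈ dyadicInterval a j, ∀ y ∈ dyadicInterval b k, min (2 ^ j) (2 ^ k) ≤ dist x y := by
  rw [dyadicInterval, dyadicInterval, Icc_inter_Icc, nonempty_Icc, ← not_lt]
  refine or_iff_not_imp_left.2 fun h x hx y hy => ?_
  have hj : (0 : ℝ) < 2 ^ j := zpow_pos two_pos j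
  have hk : (0 : ℝ) < 2 ^ k := zpow_pos two_pos k
  rw [Real.dist_eq]
  simp only [not_not, min_lt_iff, lt_max_iff] at h
  rcases h with (h | hba) | (hab | h)
  · linarith
  · have gap := add_min_zpow_le_of_lt (a := b + 1) (b := a) (j := k) (k := j)
      (by push_cast; exact hba)
    push_cast at gap
    linarith [hx.1, hy.2, min_comm ((2 : ℝ) ^ j) (2 ^ k), le_abs_self (x - y)]
  · have gap := add_min_zpow_le_of_lt (a := a + 1) (b := b) (j := j) (k := k)
      (by push_cast; exact hab)
    push_cast at gap
    linarith [hx.2, hy.1, neg_abs_le (x - y)]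
  · linarith

lemma setDist_nonpos_of_inter_nonempty {s t : Set (EuclideanSpace ℝ (Fin 2))}
    (h : (s ∩ t).Nonempty) : setDist s t ≤ 0 := by
  obtain ⟨x, hxs, hxt⟩ := h
  exact csInf_le ⟨0, by rintro _ ⟨x, -, y, -, rfl⟩; exact dist_nonneg⟩
    ⟨x, hxs, x, hxt, (dist_self x).symm⟩

lemma le_setDist_of_forall_le_dist {s t : Set (EuclideanSpace ℝ (Fin 2))} {c : ℝ}
    (hs : s.Nonempty) (ht : t.Nonempty) (h : ∀ x ∈ s, ∀ y ∈ t, c ≤ dist x y) :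
    c ≤ setDist s t := by
  obtain ⟨x, hx⟩ := hs
  obtain ⟨y, hy⟩ := ht
  exact le_csInf ⟨_, x, hx, y, hy, rfl⟩ fun _ ⟨x, hx, y, hy, hd⟩ => hd ▸ h x hx y hy

/-- If the distance between two quadtree cells is positive, then it is at least the
minimum of their edge lengths. -/
theorem stmt1 (a₁ b₁ j₁ a₂ b₂ j₂ : ℤ)
    (σ₁ σ₂ : Set (EuclideanSpace ℝ (Fin 2)))
    (hσ₁ : σ₁ = dyadicSquare a₁ b₁ j₁) (hσ₂ : σ₂ = dyadicSquare a₂ b₂ j₂)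
    (hpos : 0 < setDist σ₁ σ₂) :
    min ((2 : ℝ) ^ j₁) ((2 : ℝ) ^ j₂) ≤ setDist σ₁ σ₂ := by
  subst hσ₁ hσ₂
  have separated_along (i : Fin 2) (hi : ∀ x ∈ dyadicSquare a₁ b₁ j₁,
      ∀ y ∈ dyadicSquare a₂ b₂ j₂, min ((2 : ℝ) ^ j₁) (2 ^ j₂) ≤ dist (x i) (y i)) :
      min ((2 : ℝ) ^ j₁) (2 ^ j₂) ≤ setDist (dyadicSquare a₁ b₁ j₁) (dyadicSquare a₂ b₂ j₂) :=
    le_setDist_of_forall_le_dist (dyadicSquare_nonempty _ _ _) (dyadicSquare_nonempty _ _ _)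
      fun x hx y hy => (hi x hx y hy).trans (PiLp.dist_apply_le x y i)
  rcases dyadicInterval_inter_nonempty_or_separated a₁ j₁ a₂ j₂ with ⟨u, hu₁, hu₂⟩ | hX
  · rcases dyadicInterval_inter_nonempty_or_separated b₁ j₁ b₂ j₂ with ⟨v, hv₁, hv₂⟩ | hY
    · have common : (dyadicSquare a₁ b₁ j₁ ∩ dyadicSquare a₂ b₂ j₂).Nonempty :=
        ⟨!₂[u, v], mk_mem_dyadicSquare.2 ⟨hu₁, hv₁⟩, mk_mem_dyadicSquare.2 ⟨hu₂, hv₂⟩⟩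
      exact absurd hpos (setDist_nonpos_of_inter_nonempty common).not_gt
    · exact separated_along 1 fun x hx y hy =>
        hY _ (mem_dyadicSquare.1 hx).2 _ (mem_dyadicSquare.1 hy).2
  · exact separated_along 0 fun x hx y hy =>
      hX _ (mem_dyadicSquare.1 hx).1 _ (mem_dyadicSquare.1 hy).1
end

section
/- Let ε : ℕ → ℝ satisfy ε(0) = 1, ε(1) ≤ 2/3, ε(2) ≤ 4/7, ε(3) ≤ 8/15, all values positive, and for all r₁, r₂, s ∈ ℕ: ε(1 + r₁ + 2r₂ + 3s) ≤ (1/2)·(1/ε(r₁) + 2/ε(r₂))⁻¹ + (1/2)·ε(s). Then ε(5) ≤ 10/21. -/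
/-- With the Mustafa–Ray base cases and the ε-net recurrence of Theorem 2.3,
a `(10/21)`-net of size 5 for convex ranges exists: `ε 5 ≤ 10/21`. -/
theorem stmt6 (ε : ℕ → ℝ) (h0 : ε 0 = 1) (h1 : ε 1 ≤ 2 / 3) (h2 : ε 2 ≤ 4 / 7)
    (h3 : ε 3 ≤ 8 / 15) (hpos : ∀ k, 0 < ε k)
    (hrec : ∀ r₁ r₂ s : ℕ,
      ε (1 + r₁ + 2 * r₂ + 3 * s) ≤ (1 / 2) * (1 / ε r₁ + 2 / ε r₂)⁻¹ + (1 / 2) * ε s) :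
    ε 5 ≤ 10 / 21 := by
  have h := hrec 1 0 1
  norm_num [h0] at h
  have ha := hpos 1
  have hinv : ((ε 1)⁻¹ + 2)⁻¹ = ε 1 / (1 + 2 * ε 1) := by
    field_simp
  rw [hinv] at h
  have hd : (0:ℝ) < 1 + 2 * ε 1 := by linarith
  calc ε 5 ≤ 1 / 2 * (ε 1 / (1 + 2 * ε 1)) + 1 / 2 * ε 1 := h
    _ ≤ 10 / 21 := by
        have hb : ε 1 / (1 + 2 * ε 1) ≤ 2 / 7 := by
          rw [div_le_iff₀ hd]; nlinarith
        nlinarith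
end

section
/- In the L₁ (taxicab) metric on ℝ², let p, q ∈ ℝ² be distinct points. Consider the four closed quadrants determined by the horizontal and vertical lines through p. Then there do not exist points v₁, v₂ lying in two opposite open quadrants of p (i.e., v₁ with v₁.x > p.x, v₁.y > p.y and v₂ with v₂.x < p.x, v₂.y < p.y) such that ‖v₁ − q‖₁ < ‖v₁ − p‖₁ and ‖v₂ − q‖₁ < ‖v₂ − p‖₁. -/
/-- The L₁ norm on ℝ². -/
def l1norm (x : ℝ × ℝ) : ℝ := |x.1| + |x.2|

/-- In the L₁ metric, a single point `q` cannot beat `p` simultaneously for a voter in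
the open NE quadrant of `p` and a voter in the open SW quadrant of `p`. -/
theorem stmt10 (p q : ℝ × ℝ) (hpq : q ≠ p) :
    ¬ ∃ v₁ v₂ : ℝ × ℝ,
        p.1 < v₁.1 ∧ p.2 < v₁.2 ∧ v₂.1 < p.1 ∧ v₂.2 < p.2 ∧
        l1norm (v₁ - q) < l1norm (v₁ - p) ∧ l1norm (v₂ - q) < l1norm (v₂ - p) := by
  rintro ⟨v₁, v₂, h1, h2, h3, h4, h5, h6⟩
  simp only [l1norm, Prod.fst_sub, Prod.snd_sub] at h5 h6
  rw [abs_of_pos (show (0:ℝ) < v₁.1 - p.1 by linarith),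
      abs_of_pos (show (0:ℝ) < v₁.2 - p.2 by linarith)] at h5
  rw [abs_of_neg (show v₂.1 - p.1 < (0:ℝ) by linarith),
      abs_of_neg (show v₂.2 - p.2 < (0:ℝ) by linarith)] at h6
  have a1 := le_abs_self (v₁.1 - q.1)
  have a2 := le_abs_self (v₁.2 - q.2)
  have a3 := neg_abs_le (v₂.1 - q.1)
  have a4 := neg_abs_le (v₂.2 - q.2)
  linarith
end
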